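/- Let W be a group and S a subgroup with exactly k ≥ 2 distinct conjugates S₁ = S, S₂, …, S_k, and suppose the normal core C = S₁ ∩ ⋯ ∩ S_k has finite index in W. Let N = N_W(S₁) ∩ ⋯ ∩ N_W(S_k) and let T = S₂ ∩ ⋯ ∩ S_k (the intersection of all conjugates of S other than S itself). Then [W : C] ≥ [W : N] · [T : C]^k. -/

import Mathlib

/-- The set of all conjugates `wSw⁻¹` of a subgroup `S` of `W`. -/
def subgroupConjugates {W : Type*} [Group W] (S : Subgroup W) : Set (Subgroup W) :=
  Set.range fun w : W => Subgroup.map (MulAut.conj w).toMonoidHom S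

/-!
Conjugation permutes the `S j`. An element of `T i = ⋂_{j ≠ i} S j` fixes every `S j` with
`j ≠ i`, hence also `S i`, so `T i ≤ N`. Modulo `C` the subgroups `T i` commute pairwise (a
commutator of elements of `T i` and `T j` lies in every `S m`, since each `S m` contains one of
them and is normalized by the other) and are independent (`T j ≤ S i` for `j ≠ i`, while
`T i ∩ S i = C`). Hence their internal direct product embeds in `N / C`, and the `T i`, being
conjugate, all have index `[T : C]` over `C`; so `[T : C] ^ k ≤ [N : C] = [W : C] / [W : N]`.
-/

open scoped commutatorElement

namespace Subgroup

variable {G Q ι : Type*} [Group G] [Group Q]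

theorem commutatorElement_mem_of_mem_of_mem_normalizer {H : Subgroup G} {a b : G} (ha : a ∈ H)
    (hb : b ∈ normalizer (H : Set G)) : ⁅a, b⁆ ∈ H := by
  rw [commutatorElement_def, mul_assoc, mul_assoc, ← mul_assoc b]
  exact mul_mem ha ((mem_normalizer_iff.mp hb _).mp (inv_mem ha))

theorem commutatorElement_mem_of_mem_normalizer_of_mem {H : Subgroup G} {a b : G}
    (ha : a ∈ normalizer (H : Set G)) (hb : b ∈ H) : ⁅a, b⁆ ∈ H := by
  rw [commutatorElement_def]
  exact mul_mem ((mem_normalizer_iff.mp ha _).mp hb) (inv_mem hb)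

theorem iInf_map_eq_bot_of_iInf_eq_ker {f : G →* Q} (hf : Function.Surjective f)
    {S : ι → Subgroup G} (h : ⨅ i, S i = f.ker) : ⨅ i, (S i).map f = ⊥ := by
  apply comap_injective hf
  rw [comap_iInf, MonoidHom.comap_bot, ← h]
  exact iInf_congr fun i ↦ comap_map_eq_self (h ▸ iInf_le S i)

theorem prod_card_le_card_of_iSupIndep [Fintype ι] {H : ι → Subgroup G}
    (hcomm : Pairwise fun i j ↦ ∀ x y : G, x ∈ H i → y ∈ H j → Commute x y)
    (hind : iSupIndep H) {K : Subgroup G} [Finite K] (hHK : ∀ i, H i ≤ K) :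
    ∏ i, Nat.card (H i) ≤ Nat.card K := by
  have hrange : (noncommPiCoprod hcomm).range ≤ K := by
    rw [noncommPiCoprod_range]
    exact iSup_le hHK
  rw [← Nat.card_pi]
  exact Nat.card_le_card_of_injective (fun x ↦ ⟨_, hrange ⟨x, rfl⟩⟩) fun x y hxy ↦
    injective_noncommPiCoprod_of_iSupIndep hind (congrArg Subtype.val hxy)

section

variable {S H : ι → Subgroup G} (hbot : ⨅ i, S i = ⊥)
  (hHS : ∀ i j, i ≠ j → H i ≤ S j)
include hbot hHS

theorem commute_of_iInf_eq_bot (hHN : ∀ i j, H i ≤ normalizer (S j : Set G)) {i j : ι}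
    (hij : i ≠ j) {x y : G} (hx : x ∈ H i) (hy : y ∈ H j) : Commute x y := by
  rw [← commutatorElement_eq_one_iff_commute, ← mem_bot, ← hbot, mem_iInf]
  intro m
  by_cases hm : m = i
  · subst hm
    exact commutatorElement_mem_of_mem_normalizer_of_mem (hHN _ _ hx) (hHS _ _ hij.symm hy)
  · exact commutatorElement_mem_of_mem_of_mem_normalizer (hHS _ _ (Ne.symm hm) hx) (hHN _ _ hy)

theorem iSupIndep_of_iInf_eq_bot : iSupIndep H := by
  intro i
  have hdisj : Disjoint (H i) (S i) := by
    rw [disjoint_iff, eq_bot_iff, ← hbot]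
    refine le_iInf fun m ↦ ?_
    by_cases hm : m = i
    · exact hm ▸ inf_le_right
    · exact inf_le_left.trans (hHS i m (Ne.symm hm))
  exact hdisj.mono_right (iSup₂_le fun j hj ↦ hHS j i hj)

end

theorem prod_relIndex_le_relIndex [Fintype ι] {S T : ι → Subgroup G} {C N : Subgroup G}
    [C.Normal] [C.FiniteIndex] (hC : ⨅ i, S i = C) (hTS : ∀ i j, i ≠ j → T i ≤ S j)
    (hTN : ∀ i, T i ≤ N) (hTnorm : ∀ i j, T i ≤ normalizer (S j : Set G)) :
    ∏ i, C.relIndex (T i) ≤ C.relIndex N := by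
  set π := QuotientGroup.mk' C
  have hbot : ⨅ j, (S j).map π = ⊥ :=
    iInf_map_eq_bot_of_iInf_eq_ker (QuotientGroup.mk'_surjective C)
      (hC.trans (QuotientGroup.ker_mk' C).symm)
  have hTS' (i j : ι) (hij : i ≠ j) : (T i).map π ≤ (S j).map π := map_mono (hTS i j hij)
  have hTnorm' (i j : ι) : (T i).map π ≤ normalizer ((S j).map π : Set (G ⧸ C)) :=
    (map_mono (hTnorm i j)).trans (le_normalizer_map π)
  simp only [← QuotientGroup.ker_mk' C, relIndex_ker]
  exact prod_card_le_card_of_iSupIndep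
    (fun i j hij x y ↦ commute_of_iInf_eq_bot hbot hTS' hTnorm' hij)
    (iSupIndep_of_iInf_eq_bot hbot hTS') fun i ↦ map_mono (hTN i)

theorem map_conj_map_conj (A : Subgroup G) (g w : G) :
    (A.map (MulAut.conj w).toMonoidHom).map (MulAut.conj g).toMonoidHom =
      A.map (MulAut.conj (g * w)).toMonoidHom := by
  rw [map_map, map_mul]
  rfl

theorem image_map_conj_subgroupConjugates (A : Subgroup G) (g : G) :
    (·.map (MulAut.conj g).toMonoidHom) '' subgroupConjugates A = subgroupConjugates A := by
  rw [subgroupConjugates, ← Set.range_comp]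
  simp only [Function.comp_def, map_conj_map_conj]
  exact (Equiv.mulLeft g).surjective.range_comp fun w ↦ A.map (MulAut.conj w).toMonoidHom

theorem iInf_compl_eq_sInf {S : ι → Subgroup G} (hinj : Function.Injective S) (i : ι) :
    ⨅ j ∈ ({i}ᶜ : Set ι), S j = sInf (Set.range S \ {S i}) := by
  rw [← sInf_image, Set.compl_eq_univ_sdiff, Set.image_sdiff hinj, Set.image_univ,
    Set.image_singleton]

variable {A : Subgroup G} {S : ι → Subgroup G} (hS : Set.range S = subgroupConjugates A)
include hS

theorem exists_map_conj_eq (g : G) (i : ι) :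
    ∃ j, (S i).map (MulAut.conj g).toMonoidHom = S j := by
  have h := Set.mem_image_of_mem (·.map (MulAut.conj g).toMonoidHom)
    (Set.mem_range_self (f := S) i)
  rw [hS, image_map_conj_subgroupConjugates, ← hS] at h
  obtain ⟨j, hj⟩ := h
  exact ⟨j, hj.symm⟩

theorem iInf_eq_normalCore : ⨅ i, S i = A.normalCore := by
  rw [normalCore_eq_iInf_map_conj, ← sInf_range, hS, subgroupConjugates, sInf_range]
  rfl

theorem map_conj_iInf_compl (hinj : Function.Injective S) (g : G) {i j : ι}
    (hij : (S i).map (MulAut.conj g).toMonoidHom = S j) :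
    (⨅ m ∈ ({i}ᶜ : Set ι), S m).map (MulAut.conj g).toMonoidHom =
      ⨅ m ∈ ({j}ᶜ : Set ι), S m := by
  have h := (MulAut.conj g).mapSubgroup.map_sInf (Set.range S \ {S i})
  rw [← sInf_image] at h
  rw [iInf_compl_eq_sInf hinj, iInf_compl_eq_sInf hinj]
  refine h.trans ?_
  have hconj : ⇑(MulAut.conj g).mapSubgroup = (·.map (MulAut.conj g).toMonoidHom) := rfl
  rw [hconj, Set.image_sdiff (map_injective (MulAut.conj g).injective), Set.image_singleton, hij,
    hS, image_map_conj_subgroupConjugates]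

theorem iInf_compl_le_normalizer (hinj : Function.Injective S) (i m : ι) :
    ⨅ j ∈ ({i}ᶜ : Set ι), S j ≤ normalizer (S m : Set G) := by
  intro t ht
  simp only [mem_iInf, Set.mem_compl_singleton_iff] at ht
  by_cases hmi : m = i
  · subst hmi
    obtain ⟨j, hj⟩ := exists_map_conj_eq hS t m
    rw [mem_normalizer_iff_map_conj_eq]
    refine hj.trans (congrArg S ?_)
    by_contra hjm
    have hfix : (S j).map (MulAut.conj t).toMonoidHom = S j :=
      mem_normalizer_iff_map_conj_eq.mp (le_normalizer (ht j hjm))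
    exact hjm (hinj (map_injective (MulAut.conj t).injective (hfix.trans hj.symm)))
  · exact le_normalizer (ht m hmi)

theorem relIndex_iInf_compl_eq_of_map_conj_eq (hinj : Function.Injective S) (C : Subgroup G)
    [C.Normal] (g : G) {i j : ι} (hij : (S i).map (MulAut.conj g).toMonoidHom = S j) :
    C.relIndex (⨅ m ∈ ({j}ᶜ : Set ι), S m) =
      C.relIndex (⨅ m ∈ ({i}ᶜ : Set ι), S m) := by
  rw [← map_conj_iInf_compl hS hinj g hij]
  conv_lhs => rw [← Normal.map_conj_eq C g]
  exact relIndex_map_map_of_injective _ _ (MulAut.conj g).injective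

end Subgroup

/-- Let `S 0, …, S (k-1)` (for `k ≥ 2`) be the distinct conjugates of the subgroup `S 0` of
`W`, and suppose the normal core `C = ⋂ i, S i` has finite index in `W`.  Let `N` be the
intersection of the normalizers of the `S i`, and let `T` be the intersection of all the
conjugates other than `S 0` itself.  Then `[W : C] ≥ [W : N] · [T : C]^k`. -/
theorem core_index_ge {W : Type*} [Group W]
    (k : ℕ) (hk : 2 ≤ k)
    (S : Fin k → Subgroup W) (hinj : Function.Injective S)
    (hconj : Set.range S = subgroupConjugates (S ⟨0, by omega⟩))
    (C : Subgroup W) (hC : C = ⨅ i, S i)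
    (N : Subgroup W) (hN : N = ⨅ i, Subgroup.normalizer (S i : Set W))
    (T : Subgroup W) (hT : T = ⨅ j ∈ ({(⟨0, by omega⟩ : Fin k)}ᶜ : Set (Fin k)), S j)
    (hCfin : C.FiniteIndex) :
    N.index * (C.relIndex T) ^ k ≤ C.index := by
  have hCnormal : C.Normal :=
    hC ▸ (Subgroup.iInf_eq_normalCore hconj).symm ▸ Subgroup.normalCore_normal _
  have hTnorm (i j : Fin k) := Subgroup.iInf_compl_le_normalizer hconj hinj i j
  have hTN (i : Fin k) : ⨅ j ∈ ({i}ᶜ : Set (Fin k)), S j ≤ N := hN ▸ le_iInf (hTnorm i)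
  have hrelIndex (i : Fin k) :
      C.relIndex (⨅ j ∈ ({i}ᶜ : Set (Fin k)), S j) = C.relIndex T := by
    obtain ⟨g, hg⟩ := hconj.subset (Set.mem_range_self i)
    exact hT ▸ Subgroup.relIndex_iInf_compl_eq_of_map_conj_eq hconj hinj C g hg
  have hCN : C ≤ N := hC ▸ hN ▸ iInf_mono fun i ↦ Subgroup.le_normalizer
  calc N.index * C.relIndex T ^ k
      = N.index * ∏ i, C.relIndex (⨅ j ∈ ({i}ᶜ : Set (Fin k)), S j) := by
        simp only [hrelIndex, Finset.prod_const, Finset.card_univ, Fintype.card_fin]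
    _ ≤ N.index * C.relIndex N := Nat.mul_le_mul_left _ <|
        Subgroup.prod_relIndex_le_relIndex hC.symm (fun i j hij ↦ iInf₂_le j hij.symm)
          hTN hTnorm
    _ = C.index := by rw [mul_comm, Subgroup.relIndex_mul_index hCN]
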